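/- Let n ≥ 3, r ≥ 1, and let T¹, …, Tʳ be symmetric n×n real matrices. Set a = ∑_{α=1}^r trace(T^α)² and b = ∑_{α=1}^r ‖T^α‖_F². Then equality holds in the inequality ∑_{α=1}^r ( T^α_{11}·trace(T^α) − ∑_{j=1}^n (T^α_{1j})² ) ≥ ((n−1)/n²)·( 2a − n·b − (n−2)·√a·√((n·b − a)/(n−1)) ) if and only if the following three conditions hold: (i) each T^α is a diagonal matrix whose diagonal entries in positions 2, …, n are all equal to a common value μ_α (write λ_α = T^α_{11}); (ii) for each α, (λ_α − μ_α)·(λ_α + (n−1)·μ_α) ≤ 0; (iii) the two vectors (|λ_α + (n−1)·μ_α|)_{α=1}^r and (|λ_α − μ_α|)_{α=1}^r in ℝʳ are linearly dependent. -/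

import Mathlib

/-!
Write `λ = T₁₁`, let `μ` (`tailMean`) be the mean of the other diagonal entries of `T`, and put
`t = trace T = λ + (n-1)μ`, `q = λ - μ`, `s = ∑_{j>1} T₁ⱼ²` (`firstRowSq`), and let `d`
(`tailDefect`) be the squared Frobenius distance of the lower-right block of `T` from `μ·I`. Then
`λ·t - ∑ⱼ T₁ⱼ² = (n-1)/n² · (t² + (n-2)tq - (n-1)q²) - s` and `n‖T‖² - t² = (n-1)q² + n(2s + d)`.
Summing over `α`, `n²` times the gap in the inequality is
`(n-1)(n-2)(∑ tq + √a·Q) + n(n-2)∑ s + n(n-1)∑ d` with `Q = √((nb-a)/(n-1)) ≥ √(∑ q²)`, a sum of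
nonnegative terms by Cauchy–Schwarz. It vanishes iff all `s` and `d` vanish (condition (i), which
forces `Q = √(∑ q²)`) and `(t_α)`, `(q_α)` attain equality in `∑ tq ≥ -√(∑ t²)·√(∑ q²)`, which
amounts to (ii) and (iii).
-/

open Finset

section CauchySchwarz

variable {ι : Type*} [Fintype ι]

theorem sum_sq_mul_sum_sq_sub_sq_sum_mul (x y : ι → ℝ) :
    (∑ i, x i ^ 2) * (∑ i, y i ^ 2) - (∑ i, x i * y i) ^ 2 =
      (∑ i, ∑ j, (x i * y j - x j * y i) ^ 2) / 2 := by
  set F : ι → ι → ℝ := fun i j => x i ^ 2 * y j ^ 2 - x i * y i * (x j * y j)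
  have hsplit : ∀ i j, (x i * y j - x j * y i) ^ 2 = F i j + F j i := fun i j => by ring
  have hF : ∑ i, ∑ j, F i j = (∑ i, x i ^ 2) * (∑ i, y i ^ 2) - (∑ i, x i * y i) ^ 2 := by
    simp only [F, sum_sub_distrib, sq (∑ i, x i * y i), sum_mul_sum]
  simp only [hsplit, sum_add_distrib]
  rw [sum_comm (f := fun i j => F j i), hF]
  ring

theorem sq_sum_mul_eq_iff_forall_mul_eq (x y : ι → ℝ) :
    (∑ i, x i * y i) ^ 2 = (∑ i, x i ^ 2) * (∑ i, y i ^ 2) ↔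
      ∀ i j, x i * y j = x j * y i := by
  rw [eq_comm, ← sub_eq_zero, sum_sq_mul_sum_sq_sub_sq_sum_mul, div_eq_zero_iff,
    or_iff_left two_ne_zero,
    sum_eq_zero_iff_of_nonneg fun i _ => sum_nonneg fun j _ => sq_nonneg _]
  simp only [mem_univ, forall_const, sum_eq_zero_iff_of_nonneg fun j _ => sq_nonneg _,
    sq_eq_zero_iff, sub_eq_zero]

theorem forall_mul_eq_iff_exists (x y : ι → ℝ) :
    (∀ i j, x i * y j = x j * y i) ↔
      ∃ c d : ℝ, ¬(c = 0 ∧ d = 0) ∧ ∀ i, c * x i = d * y i := by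
  constructor
  · intro h
    by_cases hx : ∀ i, x i = 0
    · exact ⟨1, 0, by simp, fun i => by simp [hx i]⟩
    · obtain ⟨i₀, hi₀⟩ := not_forall.1 hx
      exact ⟨y i₀, x i₀, fun h => hi₀ h.2, fun i => by linarith [h i₀ i]⟩
  · rintro ⟨c, d, hcd, h⟩ i j
    by_cases hc : c = 0
    · have hd : d ≠ 0 := fun hd => hcd ⟨hc, hd⟩
      apply mul_left_cancel₀ hd
      linear_combination x j * h i - x i * h j
    · apply mul_left_cancel₀ hc
      linear_combination y j * h i - y i * h j

theorem sum_abs_mul_abs_eq_sqrt_mul_sqrt_iff (u v : ι → ℝ) :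
    ∑ i, |u i| * |v i| = √(∑ i, u i ^ 2) * √(∑ i, v i ^ 2) ↔
      ∃ c d : ℝ, ¬(c = 0 ∧ d = 0) ∧ ∀ i, c * |u i| = d * |v i| := by
  rw [← forall_mul_eq_iff_exists, ← sq_sum_mul_eq_iff_forall_mul_eq,
    ← Real.sqrt_mul (sum_nonneg fun i _ => sq_nonneg _), eq_comm,
    Real.sqrt_eq_iff_eq_sq (by positivity) (sum_nonneg fun i _ => by positivity), eq_comm]
  simp only [sq_abs]

theorem sum_mul_eq_neg_sum_abs_mul_abs_iff (u v : ι → ℝ) :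
    ∑ i, u i * v i = -∑ i, |u i| * |v i| ↔ ∀ i, u i * v i ≤ 0 := by
  rw [← sub_eq_zero, sub_neg_eq_add, ← sum_add_distrib,
    sum_eq_zero_iff_of_nonneg fun i _ => ?_]
  · simp only [mem_univ, forall_const, ← abs_mul, add_eq_zero_iff_eq_neg', abs_eq_neg_self]
  · rw [← abs_mul]; exact neg_le_iff_add_nonneg.1 (neg_abs_le _)

theorem neg_sum_abs_mul_abs_le_sum_mul (u v : ι → ℝ) :
    -∑ i, |u i| * |v i| ≤ ∑ i, u i * v i := by
  rw [← sum_neg_distrib]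
  exact sum_le_sum fun i _ => abs_mul (u i) (v i) ▸ neg_abs_le _

theorem sum_abs_mul_abs_le_sqrt_mul_sqrt (u v : ι → ℝ) :
    ∑ i, |u i| * |v i| ≤ √(∑ i, u i ^ 2) * √(∑ i, v i ^ 2) := by
  simpa only [sq_abs] using Real.sum_mul_le_sqrt_mul_sqrt univ (fun i => |u i|) fun i => |v i|

theorem neg_sqrt_mul_sqrt_le_sum_mul (u v : ι → ℝ) :
    -(√(∑ i, u i ^ 2) * √(∑ i, v i ^ 2)) ≤ ∑ i, u i * v i := by
  linarith [neg_sum_abs_mul_abs_le_sum_mul u v, sum_abs_mul_abs_le_sqrt_mul_sqrt u v]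

theorem sum_mul_eq_neg_sqrt_mul_sqrt_iff (u v : ι → ℝ) :
    ∑ i, u i * v i = -(√(∑ i, u i ^ 2) * √(∑ i, v i ^ 2)) ↔
      (∀ i, u i * v i ≤ 0) ∧ ∃ c d : ℝ, ¬(c = 0 ∧ d = 0) ∧ ∀ i, c * |u i| = d * |v i| := by
  have h₁ := neg_sum_abs_mul_abs_le_sum_mul u v
  have h₂ := sum_abs_mul_abs_le_sqrt_mul_sqrt u v
  rw [← sum_mul_eq_neg_sum_abs_mul_abs_iff, ← sum_abs_mul_abs_eq_sqrt_mul_sqrt_iff]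
  constructor
  · intro h; constructor <;> linarith
  · rintro ⟨h₃, h₄⟩; linarith

end CauchySchwarz

namespace Hineva

theorem eq_bound_iff {k a b B P S X : ℝ} (hk : 1 < k) (hS : 0 ≤ S) (hX : 0 ≤ X)
    (hP : -(√a * √B) ≤ P) (hb : (k + 1) * b - a = k * B + (k + 1) * (2 * S + X)) :
    k / (k + 1) ^ 2 * (a + (k - 1) * P - k * B) - S =
        k / (k + 1) ^ 2 * (2 * a - (k + 1) * b - (k - 1) * √a * √(((k + 1) * b - a) / k)) ↔
      S = 0 ∧ X = 0 ∧ P = -(√a * √B) := by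
  have hQ : ((k + 1) * b - a) / k = B + (k + 1) * (2 * S + X) / k := by
    rw [hb]; field_simp
  rw [hQ]
  set Q := √(B + (k + 1) * (2 * S + X) / k)
  have hBQ : √B ≤ Q := Real.sqrt_le_sqrt (le_add_of_nonneg_right (by positivity))
  have hgap : 0 ≤ P + √a * Q := by nlinarith [Real.sqrt_nonneg a]
  have key : k / (k + 1) ^ 2 * (a + (k - 1) * P - k * B) - S -
      k / (k + 1) ^ 2 * (2 * a - (k + 1) * b - (k - 1) * √a * Q) =
      (k * (k - 1) * (P + √a * Q) + (k ^ 2 - 1) * S + k * (k + 1) * X) / (k + 1) ^ 2 := by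
    field_simp
    linear_combination k * hb
  rw [← sub_eq_zero, key, div_eq_zero_iff, or_iff_left (by positivity)]
  have hk1 : 0 < k - 1 := by linarith
  have h₁ : 0 ≤ k * (k - 1) * (P + √a * Q) := by positivity
  have h₂ : 0 ≤ (k ^ 2 - 1) * S := mul_nonneg (by nlinarith) hS
  have h₃ : 0 ≤ k * (k + 1) * X := by positivity
  constructor
  · intro h
    have hS0 : S = 0 :=
      (mul_eq_zero.1 (by linarith : (k ^ 2 - 1) * S = 0)).resolve_left (by nlinarith)
    have hX0 : X = 0 :=
      (mul_eq_zero.1 (by linarith : k * (k + 1) * X = 0)).resolve_left (by positivity)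
    have hgap0 := (mul_eq_zero.1 (by linarith : k * (k - 1) * (P + √a * Q) = 0)).resolve_left
      (by positivity)
    refine ⟨hS0, hX0, ?_⟩
    simp only [Q, hS0, hX0, mul_zero, add_zero, zero_div] at hgap0
    linarith
  · rintro ⟨rfl, rfl, hP⟩
    simp [Q, hP]

section Matrix

variable {k : ℕ} (M : Fin (k + 1) → Fin (k + 1) → ℝ)

noncomputable def tailMean : ℝ := (∑ i : Fin k, M i.succ i.succ) / k

noncomputable def firstRowSq : ℝ := ∑ j : Fin k, M 0 j.succ ^ 2

noncomputable def tailDefect : ℝ :=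
  ∑ i : Fin k, ∑ j : Fin k, (M i.succ j.succ - if i = j then tailMean M else 0) ^ 2

variable {M}

theorem firstRowSq_nonneg : 0 ≤ firstRowSq M := sum_nonneg fun _ _ => sq_nonneg _

theorem tailDefect_nonneg : 0 ≤ tailDefect M :=
  sum_nonneg fun _ _ => sum_nonneg fun _ _ => sq_nonneg _

theorem sum_tail_diag_eq (hk : k ≠ 0) : ∑ i : Fin k, M i.succ i.succ = k * tailMean M := by
  rw [tailMean, mul_div_cancel₀ _ (Nat.cast_ne_zero.2 hk)]

theorem sum_diag_eq (hk : k ≠ 0) : ∑ i, M i i = M 0 0 + k * tailMean M := by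
  rw [Fin.sum_univ_succ, sum_tail_diag_eq hk]

theorem head_mul_sum_diag_sub_sum_sq (hk : k ≠ 0) :
    M 0 0 * ∑ i, M i i - ∑ j, M 0 j ^ 2 = k * (M 0 0 * tailMean M) - firstRowSq M := by
  rw [sum_diag_eq hk, Fin.sum_univ_succ (fun j => M 0 j ^ 2), firstRowSq]
  ring

theorem tailDefect_eq (hk : k ≠ 0) :
    tailDefect M = ∑ i : Fin k, ∑ j : Fin k, M i.succ j.succ ^ 2 - k * tailMean M ^ 2 := by
  have hrow : ∀ i : Fin k, ∑ j : Fin k, (M i.succ j.succ - if i = j then tailMean M else 0) ^ 2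
      = ∑ j : Fin k, M i.succ j.succ ^ 2 - (2 * M i.succ i.succ - tailMean M) * tailMean M := by
    intro i
    have hentry : ∀ j, (M i.succ j.succ - if i = j then tailMean M else 0) ^ 2 =
        M i.succ j.succ ^ 2 - if i = j then (2 * M i.succ i.succ - tailMean M) * tailMean M
          else 0 := fun j => by split_ifs with h <;> [subst h; skip] <;> ring
    rw [sum_congr rfl fun j _ => hentry j, sum_sub_distrib, Fintype.sum_ite_eq]
  rw [tailDefect, sum_congr rfl fun i _ => hrow i, sum_sub_distrib, ← sum_mul, sum_sub_distrib,
    ← mul_sum, sum_const, card_univ, Fintype.card_fin, nsmul_eq_mul, sum_tail_diag_eq hk]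
  ring

theorem sum_sum_sq_eq (hM : ∀ i j, M i j = M j i) (hk : k ≠ 0) :
    ∑ i, ∑ j, M i j ^ 2 = M 0 0 ^ 2 + 2 * firstRowSq M + k * tailMean M ^ 2 + tailDefect M := by
  simp only [tailDefect_eq hk, firstRowSq, Fin.sum_univ_succ, sum_add_distrib, hM _ 0]
  ring

theorem firstRowSq_eq_zero_iff : firstRowSq M = 0 ↔ ∀ j : Fin k, M 0 j.succ = 0 := by
  simp [firstRowSq, sum_eq_zero_iff_of_nonneg fun j _ => sq_nonneg _]

theorem tailDefect_eq_zero_iff : tailDefect M = 0 ↔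
    ∀ i j : Fin k, M i.succ j.succ = if i = j then tailMean M else 0 := by
  simp [tailDefect, sum_eq_zero_iff_of_nonneg fun i _ => sum_nonneg fun j _ => sq_nonneg _,
    sum_eq_zero_iff_of_nonneg fun j _ => sq_nonneg _, sub_eq_zero]

theorem firstRowSq_eq_zero_and_tailDefect_eq_zero_iff (hM : ∀ i j, M i j = M j i) :
    firstRowSq M = 0 ∧ tailDefect M = 0 ↔
      (∀ i j, i ≠ j → M i j = 0) ∧ ∀ i, i ≠ 0 → M i i = tailMean M := by
  rw [firstRowSq_eq_zero_iff, tailDefect_eq_zero_iff]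
  constructor
  · rintro ⟨hrow, htail⟩
    refine ⟨fun i j hij => ?_, fun i hi => ?_⟩
    · induction i using Fin.cases <;> induction j using Fin.cases
      · exact absurd rfl hij
      · exact hrow _
      · rw [hM]; exact hrow _
      · rw [htail, if_neg (fun h => hij (congrArg Fin.succ h))]
    · obtain ⟨i, rfl⟩ := Fin.exists_succ_eq.2 hi
      simpa using htail i i
  · rintro ⟨hoff, hdiag⟩
    refine ⟨fun j => hoff _ _ (Fin.succ_ne_zero j).symm, fun i j => ?_⟩
    split_ifs with h
    · subst h; exact hdiag _ (Fin.succ_ne_zero i)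
    · exact hoff _ _ (Fin.succ_injective _ |>.ne h)

theorem tailMean_eq_of_forall (hk : k ≠ 0) {μ : ℝ} (h : ∀ i, i ≠ 0 → M i i = μ) :
    tailMean M = μ := by
  have : ∑ i : Fin k, M i.succ i.succ = k * μ := by
    simp [h _ (Fin.succ_ne_zero _)]
  rw [← mul_right_inj' (Nat.cast_ne_zero.2 hk : (k : ℝ) ≠ 0), ← sum_tail_diag_eq hk, this]

end Matrix

section Family

variable {ι : Type*} [Fintype ι] {k : ℕ} {T : ι → Fin (k + 1) → Fin (k + 1) → ℝ}

theorem sum_head_mul_sum_diag_sub_sum_sq (hk : k ≠ 0) :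
    ∑ α, (T α 0 0 * ∑ i, T α i i - ∑ j, T α 0 j ^ 2) =
      k / (k + 1) ^ 2 * (∑ α, (T α 0 0 + k * tailMean (T α)) ^ 2
        + (k - 1) * ∑ α, (T α 0 0 + k * tailMean (T α)) * (T α 0 0 - tailMean (T α))
        - k * ∑ α, (T α 0 0 - tailMean (T α)) ^ 2) - ∑ α, firstRowSq (T α) := by
  rw [sum_congr rfl fun α _ => head_mul_sum_diag_sub_sum_sq hk]
  simp only [mul_sum, ← sum_add_distrib, ← sum_sub_distrib]
  exact sum_congr rfl fun α _ => by field_simp; ring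

theorem mul_sum_sum_sum_sq_sub_sum_sq_sum_diag (hT : ∀ α i j, T α i j = T α j i) (hk : k ≠ 0) :
    (k + 1) * ∑ α, ∑ i, ∑ j, T α i j ^ 2 - ∑ α, (∑ i, T α i i) ^ 2 =
      k * ∑ α, (T α 0 0 - tailMean (T α)) ^ 2
        + (k + 1) * (2 * ∑ α, firstRowSq (T α) + ∑ α, tailDefect (T α)) := by
  simp only [sum_sum_sq_eq (hT _) hk, sum_diag_eq hk, mul_sum, ← sum_add_distrib,
    ← sum_sub_distrib]
  exact sum_congr rfl fun α _ => by ring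

theorem sum_eq_bound_iff (hT : ∀ α i j, T α i j = T α j i) (hk : 2 ≤ k) {a b : ℝ}
    (ha : a = ∑ α, (∑ i, T α i i) ^ 2) (hb : b = ∑ α, ∑ i, ∑ j, T α i j ^ 2) :
    ∑ α, (T α 0 0 * ∑ i, T α i i - ∑ j, T α 0 j ^ 2) =
        k / (k + 1) ^ 2 * (2 * a - (k + 1) * b - (k - 1) * √a * √(((k + 1) * b - a) / k)) ↔
      (∀ α, firstRowSq (T α) = 0 ∧ tailDefect (T α) = 0) ∧
        ∑ α, (T α 0 0 + k * tailMean (T α)) * (T α 0 0 - tailMean (T α)) =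
          -(√(∑ α, (T α 0 0 + k * tailMean (T α)) ^ 2) *
            √(∑ α, (T α 0 0 - tailMean (T α)) ^ 2)) := by
  have hk0 : k ≠ 0 := by omega
  have ha' : a = ∑ α, (T α 0 0 + k * tailMean (T α)) ^ 2 := by simp only [ha, sum_diag_eq hk0]
  rw [sum_head_mul_sum_diag_sub_sum_sq hk0, ← ha',
    eq_bound_iff (by exact_mod_cast hk) (sum_nonneg fun α _ => firstRowSq_nonneg)
      (sum_nonneg fun α _ => tailDefect_nonneg) (ha' ▸ neg_sqrt_mul_sqrt_le_sum_mul _ _)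
      (by rw [ha, hb]; exact mul_sum_sum_sum_sq_sub_sum_sq_sum_diag hT hk0),
    ha', sum_eq_zero_iff_of_nonneg fun α _ => firstRowSq_nonneg,
    sum_eq_zero_iff_of_nonneg fun α _ => tailDefect_nonneg, ← and_assoc]
  simp only [mem_univ, forall_const, forall_and]

end Family

end Hineva

open Hineva in
/-- Equality case of the aggregated Hineva inequality (Theorem 3.1): equality holds iff
(i) each `T^α` is diagonal with the last `n−1` diagonal entries equal to a common `μ_α`,
(ii) `(λ_α − μ_α)(λ_α + (n−1)μ_α) ≤ 0` for each `α` (with `λ_α = T^α₁₁`), and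
(iii) the vectors `(|λ_α + (n−1)μ_α|)_α` and `(|λ_α − μ_α|)_α` are linearly dependent. -/
theorem hineva_sum_equality_case (n r : ℕ) (hn : 3 ≤ n)
    (T : Fin r → Fin n → Fin n → ℝ)
    (hT : ∀ α i j, T α i j = T α j i)
    (a b : ℝ)
    (ha : a = ∑ α, (∑ i, T α i i) ^ 2)
    (hb : b = ∑ α, ∑ i, ∑ j, (T α i j) ^ 2) :
    (∑ α, (T α ⟨0, by omega⟩ ⟨0, by omega⟩ * (∑ i, T α i i)
        - ∑ j, (T α ⟨0, by omega⟩ j) ^ 2) =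
      ((n : ℝ) - 1) / (n : ℝ) ^ 2 *
        (2 * a - (n : ℝ) * b -
          ((n : ℝ) - 2) * Real.sqrt a *
            Real.sqrt (((n : ℝ) * b - a) / ((n : ℝ) - 1)))) ↔
      ∃ μ : Fin r → ℝ,
        (∀ α, ∀ i j : Fin n, i ≠ j → T α i j = 0) ∧
        (∀ α, ∀ i : Fin n, i ≠ (⟨0, by omega⟩ : Fin n) → T α i i = μ α) ∧
        (∀ α, (T α ⟨0, by omega⟩ ⟨0, by omega⟩ - μ α) *
            (T α ⟨0, by omega⟩ ⟨0, by omega⟩ + ((n : ℝ) - 1) * μ α) ≤ 0) ∧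
        (∃ c d : ℝ, ¬(c = 0 ∧ d = 0) ∧
          ∀ α, c * |T α ⟨0, by omega⟩ ⟨0, by omega⟩ + ((n : ℝ) - 1) * μ α| =
            d * |T α ⟨0, by omega⟩ ⟨0, by omega⟩ - μ α|) := by
  obtain ⟨k, rfl⟩ : ∃ k, n = k + 1 := ⟨n - 1, by omega⟩
  have hk : k ≠ 0 := by omega
  simp only [Fin.zero_eta]
  rw [show ((k + 1 : ℕ) : ℝ) - 1 = k by push_cast; ring,
    show ((k + 1 : ℕ) : ℝ) - 2 = k - 1 by push_cast; ring, Nat.cast_succ,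
    sum_eq_bound_iff hT (by omega) ha hb, sum_mul_eq_neg_sqrt_mul_sqrt_iff]
  constructor
  · rintro ⟨hzero, hsign, hdep⟩
    have hshape α := (firstRowSq_eq_zero_and_tailDefect_eq_zero_iff (hT α)).1 (hzero α)
    exact ⟨fun α => tailMean (T α), fun α => (hshape α).1, fun α => (hshape α).2,
      fun α => mul_comm (T α 0 0 - _) _ ▸ hsign α, hdep⟩
  · rintro ⟨μ, hoff, hdiag, hsign, hdep⟩
    have hμ α : tailMean (T α) = μ α := tailMean_eq_of_forall hk (hdiag α)
    refine ⟨fun α => (firstRowSq_eq_zero_and_tailDefect_eq_zero_iff (hT α)).2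
      ⟨hoff α, fun i hi => (hdiag α i hi).trans (hμ α).symm⟩, ?_⟩
    simp only [hμ]
    exact ⟨fun α => mul_comm (T α 0 0 - _) _ ▸ hsign α, hdep⟩
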